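/- Let C be the all-ones single parity-check code of length d over 𝔽_p (p prime, p ≥ 3, d ≥ 3), i.e., C = {c ∈ 𝔽_p^d : Σ c_i = 0}, and P = conv(F_v(C)) ⊂ ℝ^{dp}. Then dim(P) = d(p-1), the affine hull of P is the set of x satisfying Σ_{j∈𝔽_p} x_{i,j} = 1 for each i ∈ {1,...,d}, and each inequality x_{i,j} ≥ 0 defines a facet of P. -/

import Mathlib

/-!
The vertices `cwEmb c` all have row sums `1`, and those with `c i ≠ j` also have `x i j = 0`,
so the only real work is to show that their differences span the kernels of these linear
conditions. Both kernels are spanned by row differences `e_{k,a} - e_{k,b}`. Shifting a codeword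
by `+s` in coordinate `k` and `-s` in a coordinate `l` keeps it in the code; summing the
differences over all `s ∈ F` turns rows `k` and `l` into constant rows, so two codewords that
agree at `l` yield `|F| • (e_{k,a} - e_{k,b})`. A third coordinate `l ≠ i, k` needs `d ≥ 3`, and
keeping the entry at `i` away from `j` during this needs `|F| ≥ 3`. The dimensions then follow
from rank–nullity.
-/

/-- Constant-weight embedding `F_v`. -/
noncomputable def cwEmb (F : Type*) [DecidableEq F] (d : ℕ) (c : Fin d → F) :
    Fin d → F → ℝ :=
  fun i δ => if δ = c i then 1 else 0

open Finset Module

section LevelSet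

variable {k E G : Type*} [Ring k] [AddCommGroup E] [Module k E] [AddCommGroup G] [Module k G]
  {f : E →ₗ[k] G} {y : G} {T : Set E}

theorem vectorSpan_eq_ker_of_subset_preimage (hT : T ⊆ f ⁻¹' {y})
    (hker : LinearMap.ker f ≤ vectorSpan k T) : vectorSpan k T = LinearMap.ker f := by
  refine le_antisymm ?_ hker
  rw [vectorSpan_def, Submodule.span_le, Set.vsub_subset_iff]
  intro u hu v hv
  simp [vsub_eq_sub, show f u = y from hT hu, show f v = y from hT hv]

theorem coe_affineSpan_eq_preimage (hT : T ⊆ f ⁻¹' {y})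
    (hker : LinearMap.ker f ≤ vectorSpan k T) {x₀ : E} (hx₀ : x₀ ∈ T) :
    (affineSpan k T : Set E) = f ⁻¹' {y} := by
  ext x
  rw [SetLike.mem_coe, ← AffineSubspace.vsub_right_mem_direction_iff_mem
    (subset_affineSpan k T hx₀), direction_affineSpan,
    vectorSpan_eq_ker_of_subset_preimage hT hker, LinearMap.mem_ker, vsub_eq_sub, map_sub,
    show f x₀ = y from hT hx₀, sub_eq_zero, Set.mem_preimage, Set.mem_singleton_iff]

end LevelSet

theorem LinearMap.finrank_ker_of_surjective {K V W : Type*} [DivisionRing K] [AddCommGroup V]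
    [Module K V] [AddCommGroup W] [Module K W] [FiniteDimensional K V] {f : V →ₗ[K] W}
    (hf : Function.Surjective f) : finrank K (ker f) = finrank K V - finrank K W := by
  have h := f.finrank_range_add_finrank_ker
  rw [range_eq_top.mpr hf, finrank_top] at h
  omega

theorem Pi.single_finsetSum {ι α : Type*} {M : ι → Type*} [DecidableEq ι]
    [∀ i, AddCommMonoid (M i)] (i : ι) (s : Finset α) (g : α → M i) :
    Pi.single i (∑ a ∈ s, g a) = ∑ a ∈ s, Pi.single i (g a) :=
  map_sum (AddMonoidHom.single M i) g s

theorem Fintype.exists_ne_ne_of_three_le_card {α : Type*} [Fintype α]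
    (h : 3 ≤ Fintype.card α) (x y : α) : ∃ z, z ≠ x ∧ z ≠ y :=
  Cardinal.exists_ne_ne_of_three_le (by rw [Cardinal.mk_fintype]; exact_mod_cast h) x y

namespace SingleParityCheck

variable {F : Type*} {d : ℕ}

section RowSum

variable [Fintype F]

def rowSum (F : Type*) [Fintype F] (d : ℕ) : (Fin d → F → ℝ) →ₗ[ℝ] (Fin d → ℝ) where
  toFun x i := ∑ a, x i a
  map_add' x y := by ext i; exact sum_add_distrib
  map_smul' r x := by ext i; exact (mul_sum ..).symm

@[simp] theorem rowSum_apply (x : Fin d → F → ℝ) (i : Fin d) : rowSum F d x i = ∑ a, x i a :=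
  rfl

def rowSumAndEval (i : Fin d) (j : F) : (Fin d → F → ℝ) →ₗ[ℝ] (Fin d → ℝ) × ℝ :=
  (rowSum F d).prod ((LinearMap.proj j : (F → ℝ) →ₗ[ℝ] ℝ).comp (LinearMap.proj i))

@[simp] theorem rowSumAndEval_apply (i : Fin d) (j : F) (x : Fin d → F → ℝ) :
    rowSumAndEval i j x = (rowSum F d x, x i j) :=
  rfl

theorem finrank_fin_fun_fun : finrank ℝ (Fin d → F → ℝ) = d * Fintype.card F := by
  simp [Module.finrank_pi_fintype]

end RowSum

section Embedding

variable [DecidableEq F]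

theorem cwEmb_apply (c : Fin d → F) (i : Fin d) : cwEmb F d c i = Pi.single (c i) 1 := by
  ext δ
  simp [cwEmb, Pi.single_apply]

def rowDiff (i : Fin d) (a b : F) : Fin d → F → ℝ :=
  Pi.single i (Pi.single a 1 - Pi.single b 1)

@[simp] theorem rowDiff_self (i : Fin d) (a : F) : rowDiff i a a = 0 := by
  simp [rowDiff]

theorem cwEmb_sub_cwEmb (c c' : Fin d → F) :
    cwEmb F d c - cwEmb F d c' = ∑ i, rowDiff i (c i) (c' i) := by
  rw [← univ_sum_single (cwEmb F d c - cwEmb F d c')]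
  simp [rowDiff, cwEmb_apply]

theorem cwEmb_sub_cwEmb_of_eqOn {c c' : Fin d → F} {k l : Fin d} (hkl : k ≠ l)
    (h : ∀ x, x ≠ k ∧ x ≠ l → c x = c' x) :
    cwEmb F d c - cwEmb F d c' = rowDiff k (c k) (c' k) + rowDiff l (c l) (c' l) := by
  rw [cwEmb_sub_cwEmb, Fintype.sum_eq_add k l hkl fun x hx => by rw [h x hx, rowDiff_self]]

variable [Fintype F]

theorem rowSum_cwEmb (c : Fin d → F) : rowSum F d (cwEmb F d c) = 1 := by
  ext i
  simp [cwEmb_apply]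

theorem image_cwEmb_subset_preimage_rowSum (S : Set (Fin d → F)) :
    cwEmb F d '' S ⊆ rowSum F d ⁻¹' {1} := by
  rintro _ ⟨c, -, rfl⟩
  exact rowSum_cwEmb c

theorem rowSum_rowDiff (i : Fin d) (a b : F) : rowSum F d (rowDiff i a b) = 0 := by
  ext k
  by_cases hk : k = i
  · subst hk; simp [rowDiff, sum_sub_distrib]
  · simp [rowDiff, hk]

theorem sum_rowDiff_equiv (i : Fin d) (σ : F ≃ F) (a : F) :
    ∑ s, rowDiff i (σ s) a = Pi.single i (1 - (Fintype.card F : ℝ) • Pi.single a 1) := by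
  simp only [rowDiff, ← Pi.single_finsetSum, sum_sub_distrib, sum_const, card_univ,
    σ.sum_comp (fun t => Pi.single t (1 : ℝ)), univ_sum_single (fun _ : F => (1 : ℝ)),
    Nat.cast_smul_eq_nsmul]
  rfl

theorem sum_smul_rowDiff {x : Fin d → F → ℝ} (hx : rowSum F d x = 0) (β : Fin d → F) :
    ∑ k, ∑ a, x k a • rowDiff k a (β k) = x := by
  have hx' (k : Fin d) : ∑ a, x k a = 0 := congrFun hx k
  simp only [rowDiff, ← Pi.single_smul, ← Pi.single_finsetSum, smul_sub, sum_sub_distrib, hx',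
    smul_eq_mul, mul_one, Pi.single_zero, sub_zero, univ_sum_single]

theorem finrank_ker_rowSum [Nonempty F] :
    finrank ℝ (LinearMap.ker (rowSum F d)) = d * (Fintype.card F - 1) := by
  obtain ⟨a⟩ := ‹Nonempty F›
  have hsurj : Function.Surjective (rowSum F d) := fun y =>
    ⟨fun k => Pi.single a (y k), by ext k; simp⟩
  rw [LinearMap.finrank_ker_of_surjective hsurj, finrank_fin_fun_fun, Module.finrank_fin_fun,
    Nat.mul_sub_one]

theorem finrank_ker_rowSumAndEval (hF : 2 ≤ Fintype.card F) (i : Fin d) (j : F) :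
    finrank ℝ (LinearMap.ker (rowSumAndEval i j)) = d * (Fintype.card F - 1) - 1 := by
  obtain ⟨j', hj'⟩ := Fintype.exists_ne_of_one_lt_card hF j
  have hsurj : Function.Surjective (rowSumAndEval i j) := fun ⟨y, t⟩ =>
    ⟨(fun k => Pi.single j' (y k)) + t • rowDiff i j j', by
      rw [rowSumAndEval_apply, map_add, map_smul, rowSum_rowDiff]
      ext <;> simp [rowDiff, hj'.symm]⟩
  rw [LinearMap.finrank_ker_of_surjective hsurj, finrank_fin_fun_fun, Module.finrank_prod,
    Module.finrank_fin_fun, Module.finrank_self, Nat.mul_sub_one]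
  omega

end Embedding

section Codewords

variable [AddCommGroup F]

def parityCode (F : Type*) [AddCommGroup F] (d : ℕ) : Set (Fin d → F) := {c | ∑ i, c i = 0}

def codewordsAvoiding (i : Fin d) (j : F) : Set (Fin d → F) := {c ∈ parityCode F d | c i ≠ j}

theorem shift_mem_codewordsAvoiding {i k l : Fin d} {j : F} (hk : k ≠ i) (hl : l ≠ i)
    {c : Fin d → F} (hc : c ∈ codewordsAvoiding i j) (s : F) :
    c + Pi.single k s - Pi.single l s ∈ codewordsAvoiding i j := by
  refine ⟨?_, ?_⟩
  · simpa [parityCode, sum_add_distrib, sum_sub_distrib] using hc.1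
  · simpa [hk.symm, hl.symm] using hc.2

end Codewords

section Spanning

variable [AddCommGroup F] [Fintype F] [DecidableEq F]

theorem rowDiff_mem_vectorSpan_of_shift_mem {S : Set (Fin d → F)} {k l : Fin d} (hkl : k ≠ l)
    (hS : ∀ c ∈ S, ∀ s, c + Pi.single k s - Pi.single l s ∈ S) {c c' : Fin d → F}
    (hc : c ∈ S) (hc' : c' ∈ S) (hl : c l = c' l) :
    rowDiff k (c k) (c' k) ∈ vectorSpan ℝ (cwEmb F d '' S) := by
  set q : ℝ := (Fintype.card F : ℝ)
  -- the sum over all shifts `s` of `cwEmb (shift c) - cwEmb c`: rows `k`, `l` become constant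
  set W : (Fin d → F) → Fin d → F → ℝ := fun c =>
    Pi.single k (1 - q • Pi.single (c k) 1) + Pi.single l (1 - q • Pi.single (c l) 1)
  have hW : ∀ c ∈ S, W c ∈ vectorSpan ℝ (cwEmb F d '' S) := by
    intro c hc
    have : ∑ s, (cwEmb F d (c + Pi.single k s - Pi.single l s) -ᵥ cwEmb F d c) = W c := by
      simp only [vsub_eq_sub]
      rw [sum_congr rfl fun s _ => cwEmb_sub_cwEmb_of_eqOn hkl fun x hx => by simp [hx.1, hx.2],
        sum_add_distrib]
      simp only [Pi.sub_apply, Pi.add_apply, Pi.single_eq_same, Pi.single_eq_of_ne hkl,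
        Pi.single_eq_of_ne hkl.symm, sub_zero, add_zero]
      exact congrArg₂ (· + ·) (sum_rowDiff_equiv k (.addLeft (c k)) (c k))
        (sum_rowDiff_equiv l (.subLeft (c l)) (c l))
    rw [← this]
    exact sum_mem fun s _ => vsub_mem_vectorSpan ℝ ⟨_, hS c hc s, rfl⟩ ⟨c, hc, rfl⟩
  have hq : q ≠ 0 := by
    have : Nonempty F := ⟨c k⟩
    simp [q, Fintype.card_ne_zero]
  have : q • rowDiff k (c k) (c' k) = W c' - W c := by
    simp only [W, rowDiff, hl, Pi.single_sub, smul_sub, Pi.single_smul, add_sub_add_right_eq_sub,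
      sub_sub_sub_cancel_left]
  rw [← Submodule.smul_mem_iff _ hq, this]
  exact sub_mem (hW c' hc') (hW c hc)

theorem rowDiff_mem_vectorSpan_codewordsAvoiding (hF : 3 ≤ Fintype.card F) (hd : 3 ≤ d)
    {i k : Fin d} (hk : k ≠ i) (j a b : F) :
    rowDiff k a b ∈ vectorSpan ℝ (cwEmb F d '' codewordsAvoiding i j) := by
  obtain ⟨l, hli, hlk⟩ := Fintype.exists_ne_ne_of_three_le_card (by simpa using hd) i k
  obtain ⟨e, hea, heb⟩ := Fintype.exists_ne_ne_of_three_le_card hF (-j - a) (-j - b)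
  let c (a : F) : Fin d → F := Pi.single k a + Pi.single l e + Pi.single i (-(a + e))
  have hc (a : F) (hae : e ≠ -j - a) : c a ∈ codewordsAvoiding i j := by
    refine ⟨?_, ?_⟩
    · simp [c, parityCode, sum_add_distrib]
    · simp only [c, Pi.add_apply, Pi.single_eq_of_ne hk.symm, Pi.single_eq_of_ne hli.symm,
        Pi.single_eq_same, zero_add]
      exact fun h => hae (by rw [← h]; abel)
  simpa [c, hk, hlk.symm, hli.symm, hk.symm] using rowDiff_mem_vectorSpan_of_shift_mem hlk.symm
    (fun c hc s => shift_mem_codewordsAvoiding hk hli hc s) (hc a hea) (hc b heb)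
    (by simp [c, hlk, hli])

theorem rowDiff_mem_vectorSpan_codewordsAvoiding_self (hF : 3 ≤ Fintype.card F) (hd : 3 ≤ d)
    {i : Fin d} {j a b : F} (ha : a ≠ j) (hb : b ≠ j) :
    rowDiff i a b ∈ vectorSpan ℝ (cwEmb F d '' codewordsAvoiding i j) := by
  obtain ⟨k, hki, -⟩ := Fintype.exists_ne_ne_of_three_le_card (by simpa using hd) i i
  let c (a : F) : Fin d → F := Pi.single i a - Pi.single k a
  have hc (a : F) (ha : a ≠ j) : c a ∈ codewordsAvoiding i j := by
    refine ⟨?_, ?_⟩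
    · simp [c, parityCode, sum_sub_distrib]
    · simpa [c, hki.symm] using ha
  have hdiff : cwEmb F d (c a) - cwEmb F d (c b) = rowDiff i a b + rowDiff k (-a) (-b) := by
    rw [cwEmb_sub_cwEmb_of_eqOn hki.symm (fun x hx => by simp [c, hx.1, hx.2])]
    simp [c, hki, hki.symm]
  rw [← add_sub_cancel_right (rowDiff i a b) (rowDiff k (-a) (-b)), ← hdiff]
  exact sub_mem (vsub_mem_vectorSpan ℝ ⟨_, hc a ha, rfl⟩ ⟨_, hc b hb, rfl⟩)
    (rowDiff_mem_vectorSpan_codewordsAvoiding hF hd hki _ _ _)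

theorem ker_rowSumAndEval_le (hF : 3 ≤ Fintype.card F) (hd : 3 ≤ d) (i : Fin d) (j : F) :
    LinearMap.ker (rowSumAndEval i j) ≤ vectorSpan ℝ (cwEmb F d '' codewordsAvoiding i j) := by
  intro x hx
  obtain ⟨hrow, hij⟩ : rowSum F d x = 0 ∧ x i j = 0 := Prod.mk_eq_zero.mp hx
  obtain ⟨j', hj'⟩ := Fintype.exists_ne_of_one_lt_card (by omega) j
  rw [← sum_smul_rowDiff hrow fun _ => j']
  refine sum_mem fun k _ => sum_mem fun a _ => ?_
  rcases eq_or_ne k i with rfl | hk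
  · rcases eq_or_ne a j with rfl | ha
    · simp [hij]
    · exact Submodule.smul_mem _ _ (rowDiff_mem_vectorSpan_codewordsAvoiding_self hF hd ha hj')
  · exact Submodule.smul_mem _ _ (rowDiff_mem_vectorSpan_codewordsAvoiding hF hd hk j a j')

theorem ker_rowSum_le (hF : 3 ≤ Fintype.card F) (hd : 3 ≤ d) :
    LinearMap.ker (rowSum F d) ≤ vectorSpan ℝ (cwEmb F d '' parityCode F d) := by
  intro x hx
  rw [← sum_smul_rowDiff hx 0]
  refine sum_mem fun k _ => sum_mem fun a _ => Submodule.smul_mem _ _ ?_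
  obtain ⟨i, hik, -⟩ := Fintype.exists_ne_ne_of_three_le_card (by simpa using hd) k k
  exact vectorSpan_mono ℝ (Set.image_mono fun c hc => hc.1)
    (rowDiff_mem_vectorSpan_codewordsAvoiding hF hd hik.symm 0 a _)

end Spanning

section Polytope

variable [AddCommGroup F] [Fintype F] [DecidableEq F]

theorem coe_affineSpan_convexHull_parityCode (hF : 3 ≤ Fintype.card F) (hd : 3 ≤ d) :
    (affineSpan ℝ (convexHull ℝ (cwEmb F d '' parityCode F d)) : Set (Fin d → F → ℝ)) =
      {x | ∀ i, ∑ j, x i j = 1} := by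
  rw [affineSpan_convexHull, coe_affineSpan_eq_preimage (image_cwEmb_subset_preimage_rowSum _)
    (ker_rowSum_le hF hd) ⟨0, by simp [parityCode], rfl⟩]
  ext x
  simp [funext_iff]

theorem finrank_direction_affineSpan_convexHull_parityCode (hF : 3 ≤ Fintype.card F)
    (hd : 3 ≤ d) :
    finrank ℝ (affineSpan ℝ (convexHull ℝ (cwEmb F d '' parityCode F d))).direction =
      d * (Fintype.card F - 1) := by
  have : Nonempty F := Fintype.card_pos_iff.mp (by omega)
  rw [affineSpan_convexHull, direction_affineSpan, vectorSpan_eq_ker_of_subset_preimage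
    (image_cwEmb_subset_preimage_rowSum _) (ker_rowSum_le hF hd), finrank_ker_rowSum]

theorem finrank_direction_affineSpan_facet (hF : 3 ≤ Fintype.card F) (hd : 3 ≤ d)
    (i : Fin d) (j : F) :
    finrank ℝ (affineSpan ℝ
      {x ∈ convexHull ℝ (cwEmb F d '' parityCode F d) | x i j = 0}).direction =
      d * (Fintype.card F - 1) - 1 := by
  have hT : {x ∈ convexHull ℝ (cwEmb F d '' parityCode F d) | x i j = 0} ⊆
      rowSumAndEval i j ⁻¹' {(1, 0)} := by
    rintro x ⟨hx, hxij⟩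
    have : rowSum F d x = 1 := convexHull_min (image_cwEmb_subset_preimage_rowSum _)
      ((convex_singleton 1).linear_preimage _) hx
    simp [this, hxij]
  have hV : cwEmb F d '' codewordsAvoiding i j ⊆
      {x ∈ convexHull ℝ (cwEmb F d '' parityCode F d) | x i j = 0} := by
    rintro _ ⟨c, hc, rfl⟩
    exact ⟨subset_convexHull ℝ _ ⟨c, hc.1, rfl⟩, by simp [cwEmb, Ne.symm hc.2]⟩
  rw [direction_affineSpan, vectorSpan_eq_ker_of_subset_preimage hT
    ((ker_rowSumAndEval_le hF hd i j).trans (vectorSpan_mono ℝ hV)),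
    finrank_ker_rowSumAndEval (by omega)]

end Polytope

end SingleParityCheck

open SingleParityCheck in
/-- for the all-ones SPC code `C` of length `d ≥ 3` over `𝔽_p`
(`p ≥ 3` prime) and `P = conv(F_v(C))`: `dim P = d(p-1)`, the affine hull of `P`
is described by the simplex equations `Σ_j x_{i,j} = 1`, and each inequality
`x_{i,j} ≥ 0` defines a facet of `P`. -/
theorem stmt13 (p : ℕ) [Fact p.Prime] (hp3 : 3 ≤ p) (d : ℕ) (hd : 3 ≤ d) :
    Module.finrank ℝ
        (affineSpan ℝ (convexHull ℝ
          (cwEmb (ZMod p) d '' {c : Fin d → ZMod p | ∑ i, c i = 0}))).direction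
      = d * (p - 1) ∧
    ((affineSpan ℝ (convexHull ℝ
        (cwEmb (ZMod p) d '' {c : Fin d → ZMod p | ∑ i, c i = 0})) :
          Set (Fin d → ZMod p → ℝ)) =
      {x | ∀ i : Fin d, ∑ j : ZMod p, x i j = 1}) ∧
    (∀ (i : Fin d) (j : ZMod p),
      Module.finrank ℝ
          (affineSpan ℝ {x ∈ convexHull ℝ
            (cwEmb (ZMod p) d '' {c : Fin d → ZMod p | ∑ i, c i = 0}) |
              x i j = 0}).direction
        = d * (p - 1) - 1) := by
  have hF : 3 ≤ Fintype.card (ZMod p) := by rwa [ZMod.card]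
  refine ⟨?_, coe_affineSpan_convexHull_parityCode hF hd, fun i j => ?_⟩
  · have h := finrank_direction_affineSpan_convexHull_parityCode hF hd
    rwa [ZMod.card] at h
  · have h := finrank_direction_affineSpan_facet hF hd i j
    rwa [ZMod.card] at h
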